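/- arXiv:1712.02084 — 3 statements merged into one kernel-verified Lean document; each statement's English description precedes it below -/
import Mathlib

section
/- Monotonicity of the minimal covering size under infixes: for every dictionary D, if s₁ is a nonempty contiguous subsequence (infix) of s₂, then the minimal covering size of s₁ by D is at most the minimal covering size of s₂ by D. More precisely, from any covering of s₂ by D with n blocks one can construct a covering of s₁ by D with at most n blocks. -/
/-- A dictionary over the alphabet `α`: a set of nonempty lists containing all
single-letter lists and closed under nonempty contiguous subsequences (infixes). -/
def IsDictionary {α : Type*} (D : Set (List α)) : Prop :=
  (∀ a : α, [a] ∈ D) ∧ (∀ t ∈ D, t ≠ []) ∧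
  (∀ t ∈ D, ∀ u : List α, u ≠ [] → u <:+: t → u ∈ D)

/-- `L` is a covering of `s` by `D`: every block of `L` belongs to `D`
and the concatenation of the blocks equals `s`. -/
def IsCovering {α : Type*} (D : Set (List α)) (L : List (List α)) (s : List α) : Prop :=
  (∀ b ∈ L, b ∈ D) ∧ L.flatten = s

/-- The minimal number of blocks of a covering of `s` by `D`. -/
noncomputable def minCover {α : Type*} (D : Set (List α)) (s : List α) : ℕ :=
  sInf {n | ∃ L, IsCovering D L s ∧ L.length = n}

/-- The covering similarity `𝒮(s,S) = (|s| - k + 1)/|s|` where `k` is the minimal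
covering size of `s` by the dictionary `D`. -/
noncomputable def covSim {α : Type*} (D : Set (List α)) (s : List α) : ℝ :=
  ((s.length : ℝ) - (minCover D s : ℝ) + 1) / (s.length : ℝ)

/-- Splitting an infix of an append. -/
lemma infix_append_split {α : Type*} {s u v : List α} (h : s <:+: u ++ v) :
    s <:+: u ∨ s <:+: v ∨
      ∃ x y, s = x ++ y ∧ x ≠ [] ∧ y ≠ [] ∧ x <:+ u ∧ y <+: v := by
  obtain ⟨p, q, hpq⟩ := h
  rw [List.append_assoc] at hpq
  rcases List.append_eq_append_iff.mp hpq with ⟨a, ha, hb⟩ | ⟨c, hc, hv⟩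
  · -- u = p ++ a, s ++ q = a ++ v
    rcases List.append_eq_append_iff.mp hb with ⟨w, hw1, hw2⟩ | ⟨w, hw1, hw2⟩
    · -- a = s ++ w, q = w ++ v : s prefix of a, a suffix of u
      left
      have h1 : s <:+: a := ⟨[], w, by simp [hw1]⟩
      exact h1.trans ⟨p, [], by simp [ha]⟩
    · -- s = a ++ w, v = w ++ q
      by_cases hane : a = []
      · right; left
        subst hane
        exact ⟨[], q, by simp [hw1, hw2]⟩
      · by_cases hwne : w = []
        · left
          subst hwne
          exact ⟨p, [], by simp [ha, hw1]⟩
        · right; right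
          exact ⟨a, w, hw1, hane, hwne, ⟨p, ha.symm⟩, ⟨q, hw2.symm⟩⟩
  · -- p = u ++ c, v = c ++ (s ++ q)
    right; left
    exact ⟨c, q, by simp [hv]⟩

lemma cover_of_infix {α : Type*} (D : Set (List α)) (hD : IsDictionary D) :
    ∀ (L : List (List α)) (s : List α), s ≠ [] → s <:+: L.flatten →
      (∀ b ∈ L, b ∈ D) →
      ∃ L' : List (List α), IsCovering D L' s ∧ L'.length ≤ L.length := by
  intro L
  induction L with
  | nil =>
    intro s hs hinf _
    simp at hinf
    exact absurd hinf hs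
  | cons b T ih =>
    intro s hs hinf hmem
    rw [List.flatten_cons] at hinf
    rcases infix_append_split hinf with h1 | h2 | ⟨x, y, hxy, hx, hy, hxu, hyv⟩
    · refine ⟨[s], ⟨?_, by simp⟩, by simp⟩
      intro c hc
      simp at hc; subst hc
      exact hD.2.2 b (hmem b (by simp)) c hs h1
    · obtain ⟨L', hL', hlen⟩ := ih s hs h2 (fun c hc => hmem c (by simp [hc]))
      exact ⟨L', hL', hlen.trans (by simp)⟩
    · have hyinf : y <:+: T.flatten := hyv.isInfix
      obtain ⟨L', hL', hlen⟩ := ih y hy hyinf (fun c hc => hmem c (by simp [hc]))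
      refine ⟨x :: L', ⟨?_, ?_⟩, ?_⟩
      · intro c hc
        rcases List.mem_cons.mp hc with rfl | hc
        · exact hD.2.2 b (hmem b (by simp)) c hx hxu.isInfix
        · exact hL'.1 c hc
      · simp [hL'.2, hxy]
      · simpa using Nat.succ_le_succ hlen

/-- Monotonicity of the minimal covering size under infixes: if `s₁` is a nonempty
infix of `s₂` then `minCover D s₁ ≤ minCover D s₂`; more precisely, from any covering
of `s₂` by `D` one can construct a covering of `s₁` by `D` with at most as many blocks. -/
theorem minCover_mono_infix {α : Type*} (D : Set (List α)) (hD : IsDictionary D)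
    (s₁ s₂ : List α) (h₁ : s₁ ≠ []) (h : s₁ <:+: s₂) :
    minCover D s₁ ≤ minCover D s₂ ∧
      ∀ L : List (List α), IsCovering D L s₂ →
        ∃ L' : List (List α), IsCovering D L' s₁ ∧ L'.length ≤ L.length := by
  have key : ∀ L : List (List α), IsCovering D L s₂ →
      ∃ L' : List (List α), IsCovering D L' s₁ ∧ L'.length ≤ L.length := by
    intro L hL
    have : s₁ <:+: L.flatten := hL.2 ▸ h
    exact cover_of_infix D hD L s₁ h₁ this hL.1
  refine ⟨?_, key⟩
  have hflat : ∀ t : List α, (t.map (fun a => [a])).flatten = t := by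
    intro t; induction t <;> simp_all
  have hne : {n | ∃ L, IsCovering D L s₂ ∧ L.length = n}.Nonempty := by
    refine ⟨(s₂.map (fun a => [a])).length, s₂.map (fun a => [a]), ⟨?_, hflat s₂⟩, rfl⟩
    intro c hc
    obtain ⟨a, _, rfl⟩ := List.mem_map.mp hc
    exact hD.1 a
  obtain ⟨L, hL, hlen⟩ := Nat.sInf_mem hne
  obtain ⟨L', hL', hle⟩ := key L hL
  calc minCover D s₁ ≤ L'.length := Nat.sInf_le ⟨L', hL', rfl⟩
    _ ≤ L.length := hle
    _ = minCover D s₂ := hlen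
end

section
/- Proposition 1 (greedy optimality, recursive form): let D be a dictionary, s a nonempty list, a a prefix of s belonging to D of maximal length among all prefixes of s belonging to D, and write s = a ++ r. If r is nonempty, then the minimal covering size of s by D equals 1 plus the minimal covering size of r by D; if r is empty, the minimal covering size of s by D equals 1. -/
section Covering

variable {α : Type*} {D : Set (List α)}

theorem isCovering_nil : IsCovering D [] [] := ⟨by simp, rfl⟩

theorem IsCovering.cons {b s : List α} {L : List (List α)} (hb : b ∈ D)
    (hL : IsCovering D L s) : IsCovering D (b :: L) (b ++ s) :=
  ⟨List.forall_mem_cons.2 ⟨hb, hL.1⟩, by simp [hL.2]⟩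

theorem isCovering_cons_iff {b s : List α} {L : List (List α)} :
    IsCovering D (b :: L) s ↔ b ∈ D ∧ IsCovering D L L.flatten ∧ s = b ++ L.flatten := by
  simp only [IsCovering, List.forall_mem_cons, List.flatten_cons, and_assoc, true_and, eq_comm]

theorem exists_isCovering_length_eq (hD : ∀ x : α, [x] ∈ D) (s : List α) :
    ∃ L, IsCovering D L s ∧ L.length = s.length := by
  induction s with
  | nil => exact ⟨[], isCovering_nil, rfl⟩
  | cons x s ih =>
    obtain ⟨L, hL, hlen⟩ := ih
    exact ⟨[x] :: L, hL.cons (hD x), by simp [hlen]⟩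

theorem minCover_le {s : List α} {L : List (List α)} (hL : IsCovering D L s) :
    minCover D s ≤ L.length :=
  Nat.sInf_le ⟨L, hL, rfl⟩

theorem exists_isCovering_length_eq_minCover (hD : ∀ x : α, [x] ∈ D) (s : List α) :
    ∃ L, IsCovering D L s ∧ L.length = minCover D s :=
  Nat.sInf_mem (s := {n | ∃ L, IsCovering D L s ∧ L.length = n})
    (let ⟨L, hL, _⟩ := exists_isCovering_length_eq hD s; ⟨_, L, hL, rfl⟩)

theorem minCover_nil : minCover D ([] : List α) = 0 :=
  Nat.eq_zero_of_le_zero (minCover_le isCovering_nil)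

theorem IsCovering.exists_of_suffix (hD : IsDictionary D) {L : List (List α)} {s t : List α}
    (hL : IsCovering D L s) (ht : t <:+ s) : ∃ M, IsCovering D M t ∧ M.length ≤ L.length := by
  induction L generalizing s with
  | nil =>
    obtain rfl : t = [] := by simpa [← hL.2] using ht
    exact ⟨[], isCovering_nil, le_rfl⟩
  | cons b L ih =>
    obtain ⟨hb, hLtail, rfl⟩ := isCovering_cons_iff.1 hL
    obtain ⟨u, hu⟩ := ht
    rcases List.append_eq_append_iff.1 hu with ⟨c, hbc, rfl⟩ | ⟨c, -, hct⟩
    · by_cases hc : c = []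
      · subst hc
        exact ⟨L, hLtail, Nat.le_succ _⟩
      · have hcD : c ∈ D := hD.2.2 b hb c hc (hbc ▸ List.suffix_append u c).isInfix
        exact ⟨c :: L, hLtail.cons hcD, le_rfl⟩
    · obtain ⟨M, hM, hlen⟩ := ih hLtail ⟨c, hct.symm⟩
      exact ⟨M, hM, hlen.trans (Nat.le_succ _)⟩

theorem minCover_le_of_suffix (hD : IsDictionary D) {s t : List α} (ht : t <:+ s) :
    minCover D t ≤ minCover D s := by
  obtain ⟨L, hL, hlen⟩ := exists_isCovering_length_eq_minCover hD.1 s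
  obtain ⟨M, hM, hMlen⟩ := hL.exists_of_suffix hD ht
  exact (minCover_le hM).trans (hMlen.trans hlen.le)

theorem minCover_append_of_longest_prefix (hD : IsDictionary D) {a r : List α} (ha : a ∈ D)
    (hmax : ∀ p ∈ D, p <+: a ++ r → p.length ≤ a.length) :
    minCover D (a ++ r) = minCover D r + 1 := by
  apply le_antisymm
  · obtain ⟨M, hM, hlen⟩ := exists_isCovering_length_eq_minCover hD.1 r
    simpa [hlen] using minCover_le (hM.cons ha)
  · obtain ⟨L, hL, hlen⟩ := exists_isCovering_length_eq_minCover hD.1 (a ++ r)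
    rw [← hlen]
    cases L with
    | nil => exact absurd (List.append_eq_nil_iff.1 hL.2.symm).1 (hD.2.1 a ha)
    | cons b L =>
      obtain ⟨hb, hLtail, hbL⟩ := isCovering_cons_iff.1 hL
      have hb_prefix : b <+: a ++ r := hbL ▸ List.prefix_append b _
      -- The first block of a minimal covering is a prefix of the greedy block `a`,
      -- so `r` is a suffix of what the remaining blocks cover.
      obtain ⟨c, rfl⟩ : b <+: a :=
        List.prefix_of_prefix_length_le hb_prefix (List.prefix_append a r) (hmax b hb hb_prefix)
      have hr : r <:+ L.flatten := ⟨c, by simpa using hbL⟩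
      calc minCover D r + 1 ≤ minCover D L.flatten + 1 := by
            gcongr; exact minCover_le_of_suffix hD hr
        _ ≤ L.length + 1 := by gcongr; exact minCover_le hLtail
        _ = (b :: L).length := rfl

end Covering

theorem greedy_recursive_optimality_general {α : Type*} (D : Set (List α)) (hD : IsDictionary D)
    (s a r : List α) (haD : a ∈ D) (har : a ++ r = s)
    (hmax : ∀ p ∈ D, p <+: s → p.length ≤ a.length) :
    (r ≠ [] → minCover D s = 1 + minCover D r) ∧ (r = [] → minCover D s = 1) := by
  subst har
  have hgreedy := minCover_append_of_longest_prefix hD haD hmax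
  refine ⟨fun _ => by omega, fun hr => ?_⟩
  simpa [hr, minCover_nil] using hgreedy

/-- Proposition 1 (greedy optimality, recursive form): if `a` is a maximal-length
prefix of the nonempty list `s` belonging to the dictionary `D`, with `s = a ++ r`,
then `minCover D s = 1 + minCover D r` when `r` is nonempty, and `minCover D s = 1`
when `r` is empty. -/
theorem greedy_recursive_optimality {α : Type*} (D : Set (List α)) (hD : IsDictionary D)
    (s a r : List α) (hs : s ≠ []) (haD : a ∈ D) (har : a ++ r = s)
    (hmax : ∀ p ∈ D, p <+: s → p.length ≤ a.length) :
    (r ≠ [] → minCover D s = 1 + minCover D r) ∧ (r = [] → minCover D s = 1) :=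
  greedy_recursive_optimality_general D hD s a r haD har hmax
end

section
/- Proposition 1 (greedy optimality, global form): let D be a dictionary and s a nonempty list. If L = [t₁, …, t_k] is a covering of s by D such that for each i the block t_i is a prefix of the suffix t_i ++ t_{i+1} ++ … ++ t_k of maximal length among all prefixes of that suffix belonging to D (i.e., L is the greedy covering produced by Algorithm 2), then L has minimal length among all coverings of s by D; that is, the greedy covering is an S-optimal covering of s. -/
lemma exchange {α : Type*} (D : Set (List α)) (hD : IsDictionary D) :
    ∀ L' : List (List α), (∀ b ∈ L', b ∈ D) → ∀ t : List α, t <+: L'.flatten →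
    ∃ M : List (List α), IsCovering D M (L'.flatten.drop t.length) ∧ M.length ≤ L'.length ∧
      (∀ u U, L' = u :: U → u.length ≤ t.length → M.length < L'.length) := by
  intro L'
  induction L' with
  | nil =>
    intro _ t ht
    refine ⟨[], ⟨by simp, by simp⟩, le_refl _, ?_⟩
    intro u U h; simp at h
  | cons u U ih =>
    intro hmem t ht
    rcases lt_trichotomy t.length u.length with hlt | heq | hgt
    · refine ⟨(u.drop t.length) :: U, ⟨?_, ?_⟩, by simp, ?_⟩
      · intro b hb
        rcases List.mem_cons.mp hb with rfl | hb
        · exact hD.2.2 u (hmem u (by simp)) _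
            (by simp [List.drop_eq_nil_iff]; omega)
            (u.drop_suffix t.length).isInfix
        · exact hmem b (by simp [hb])
      · simp only [List.flatten_cons, List.drop_append]
        have : t.length - u.length = 0 := by omega
        simp [this]
      · intro v V hv hle
        injection hv with h1 h2; subst h1; omega
    · refine ⟨U, ⟨fun b hb => hmem b (by simp [hb]), ?_⟩, by simp, fun _ _ _ _ => by simp⟩
      simp only [List.flatten_cons, heq, List.drop_left]
    · have hu : u <+: (u :: U).flatten := ⟨U.flatten, by simp⟩
      have hut : u <+: t := List.prefix_of_prefix_length_le hu ht (by omega)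
      obtain ⟨w, rfl⟩ := hut
      have hw : w <+: U.flatten := by
        simp only [List.flatten_cons] at ht
        exact (List.prefix_append_right_inj u).mp ht
      obtain ⟨M, hM, hlen, -⟩ := ih (fun b hb => hmem b (by simp [hb])) w hw
      refine ⟨M, ⟨hM.1, ?_⟩, by simp; omega, fun _ _ _ _ => by simp; omega⟩
      rw [hM.2]
      simp only [List.flatten_cons, List.drop_append, List.length_append]
      have h1 : u.drop (u.length + w.length) = [] := List.drop_eq_nil_of_le (by omega)
      have h2 : u.length + w.length - u.length = w.length := by omega
      rw [h1, h2, List.nil_append]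

lemma aux_greedy {α : Type*} (D : Set (List α)) (hD : IsDictionary D) :
    ∀ L : List (List α), (∀ b ∈ L, b ∈ D) →
    (∀ i (hi : i < L.length), ∀ p ∈ D, p <+: (L.drop i).flatten →
      p.length ≤ (L.get ⟨i, hi⟩).length) →
    ∀ L' : List (List α), IsCovering D L' L.flatten → L.length ≤ L'.length := by
  intro L
  induction L with
  | nil => intro _ _ L' _; simp
  | cons t T ih =>
    intro hmem hg L' hL'
    have htD : t ∈ D := hmem t (by simp)
    have htne : t ≠ [] := hD.2.1 t htD
    match L' with
    | [] =>
      exfalso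
      have := hL'.2
      simp at this
      exact htne this.1
    | u :: U =>
      have huD : u ∈ D := hL'.1 u (by simp)
      have hupre : u <+: (t :: T).flatten := hL'.2 ▸ (u.prefix_append U.flatten : u <+: (u :: U).flatten)
      have hule : u.length ≤ t.length := by
        have := hg 0 (by simp) u huD (by simpa using hupre)
        simpa using this
      have htpre : t <+: (u :: U).flatten := by
        rw [hL'.2]; exact ⟨T.flatten, by simp⟩
      obtain ⟨M, hM, -, hstrict⟩ := exchange D hD (u :: U) hL'.1 t htpre
      have hMcov : IsCovering D M T.flatten := by
        have : (u :: U).flatten.drop t.length = T.flatten := by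
          rw [hL'.2]; simp [List.flatten_cons, List.drop_left]
        rwa [this] at hM
      have hT : T.length ≤ M.length := by
        apply ih (fun b hb => hmem b (by simp [hb]))
        · intro i hi p hp hpre
          have := hg (i + 1) (by simpa using Nat.succ_lt_succ hi) p hp (by simpa using hpre)
          simpa using this
        · exact hMcov
      have := hstrict u U rfl hule
      simp at this ⊢
      omega

/-- Proposition 1 (greedy optimality, global form): if `L` is a covering of the
nonempty list `s` by the dictionary `D` such that each block `L[i]` has maximal
length among all prefixes (belonging to `D`) of the remaining suffix
`(L.drop i).flatten`, then `L` has minimal length among all coverings of `s` by `D`. -/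
theorem greedy_covering_optimal {α : Type*} (D : Set (List α)) (hD : IsDictionary D)
    (s : List α) (hs : s ≠ []) (L : List (List α)) (hL : IsCovering D L s)
    (hgreedy : ∀ i (hi : i < L.length),
      ∀ p ∈ D, p <+: (L.drop i).flatten → p.length ≤ (L.get ⟨i, hi⟩).length) :
    ∀ L' : List (List α), IsCovering D L' s → L.length ≤ L'.length := by
  intro L' hL'
  have hflat : L.flatten = s := hL.2
  subst hflat
  exact aux_greedy D hD L hL.1 hgreedy L' hL'
end
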